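/- Suppose there exists a positive random sequence (α_n) increasing to infinity and a symmetric positive definite d×d matrix L such that S_n/α_n → L a.s. Let (M_n) be any sequence of R^d-valued random vectors, and set V_n = M_n^t S_{n-1}^{-1} M_n and v_n = α_{n-1}^{-1} M_n^t L^{-1} M_n. Then V_n = v_n + o(v_n) almost surely; more precisely, |V_n − v_n| ≤ ρ_{n-1} v_n pointwise, where ρ_{n-1} is the spectral radius of the symmetric matrix α_{n-1} L^{1/2} S_{n-1}^{-1} L^{1/2} − I, and ρ_{n-1} → 0 almost surely. -/

import Mathlib

open MeasureTheory Filter Finset Matrix Topology Asymptotics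

/-!
In the coordinates `x = L^{-1/2} M_n` one has `v_n = α_{n-1}⁻¹ xᵗx` and
`V_n - v_n = α_{n-1}⁻¹ xᵗ R_{n-1} x`, where `R_n = α_n L^{1/2} S_n⁻¹ L^{1/2} - I` is symmetric, so
`|xᵗ R x| ≤ ρ(R) xᵗx` gives the pointwise bound. Since `(S_n/α_n)⁻¹ → L⁻¹`, `R_n → 0`, and the
spectral radius is dominated by any Banach algebra norm, so `ρ_n → 0`.
-/

noncomputable section

def Smat {Ω : Type*} {d : ℕ} (S : Matrix (Fin d) (Fin d) ℝ)
    (Φ : ℕ → Ω → Fin d → ℝ) (n : ℕ) (ω : Ω) : Matrix (Fin d) (Fin d) ℝ :=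
  S + ∑ k ∈ Finset.range (n + 1), vecMulVec (Φ k ω) (Φ k ω)

section BanachAlgebra

variable {A : Type*} [NormedRing A] [NormedAlgebra ℝ A] [CompleteSpace A]

theorem spectrum.abs_le_iSup_abs {a : A} {x : ℝ} (hx : x ∈ spectrum ℝ a) :
    |x| ≤ ⨆ y ∈ spectrum ℝ a, |y| := by
  have hbdd : BddAbove (Set.range fun y => ⨆ _ : y ∈ spectrum ℝ a, |y|) :=
    ⟨‖a‖ * ‖(1 : A)‖, Set.forall_mem_range.2 fun y =>
      Real.iSup_le (fun hy => spectrum.norm_le_norm_mul_of_mem hy) (by positivity)⟩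
  exact le_ciSup_of_le hbdd x (ciSup_pos (f := fun _ => |x|) hx).ge

theorem spectrum.iSup_abs_le_norm_mul (a : A) :
    (⨆ y ∈ spectrum ℝ a, |y|) ≤ ‖a‖ * ‖(1 : A)‖ :=
  Real.iSup_le (fun y => Real.iSup_le (fun hy => spectrum.norm_le_norm_mul_of_mem hy)
    (by positivity)) (by positivity)

theorem spectrum.tendsto_iSup_abs_zero {ι : Type*} {l : Filter ι} {a : ι → A}
    (ha : Tendsto a l (𝓝 0)) : Tendsto (fun i => ⨆ y ∈ spectrum ℝ (a i), |y|) l (𝓝 0) := by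
  have hnorm : Tendsto (fun i => ‖a i‖ * ‖(1 : A)‖) l (𝓝 0) := by
    simpa using (tendsto_norm_zero.comp ha).mul_const ‖(1 : A)‖
  exact squeeze_zero (fun i => Real.iSup_nonneg fun y => Real.iSup_nonneg fun _ => abs_nonneg y)
    (fun i => spectrum.iSup_abs_le_norm_mul (a i)) hnorm

end BanachAlgebra

section Matrix

variable {n : Type*} [Fintype n] [DecidableEq n]

theorem Matrix.IsHermitian.dotProduct_mulVec_le {A : Matrix n n ℝ} (hA : A.IsHermitian) {r : ℝ}
    (hr : ∀ x ∈ spectrum ℝ A, x ≤ r) (v : n → ℝ) : v ⬝ᵥ A *ᵥ v ≤ r * (v ⬝ᵥ v) := by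
  have hpsd : (algebraMap ℝ _ r - A).PosSemidef := by
    refine posSemidef_iff_isHermitian_and_spectrum_nonneg.2
      ⟨(isHermitian_diagonal _).sub hA, ?_⟩
    rw [← spectrum.singleton_sub_eq]
    rintro _ ⟨_, rfl, x, hx, rfl⟩
    exact sub_nonneg.2 (hr x hx)
  have := hpsd.dotProduct_mulVec_nonneg v
  simpa [Algebra.algebraMap_eq_smul_one, sub_mulVec, smul_mulVec, dotProduct_sub] using this

section Norm

-- The `L^∞` operator norm induces the usual topology, so the Banach algebra facts apply.
attribute [local instance] Matrix.linftyOpNormedRing Matrix.linftyOpNormedAlgebra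

theorem Matrix.IsHermitian.abs_dotProduct_mulVec_le {A : Matrix n n ℝ} (hA : A.IsHermitian)
    (v : n → ℝ) : |v ⬝ᵥ A *ᵥ v| ≤ (⨆ x ∈ spectrum ℝ A, |x|) * (v ⬝ᵥ v) := by
  refine abs_le.2 ⟨?_, hA.dotProduct_mulVec_le (fun x hx => (le_abs_self x).trans
    (spectrum.abs_le_iSup_abs hx)) v⟩
  have hneg := hA.neg.dotProduct_mulVec_le (r := ⨆ x ∈ spectrum ℝ A, |x|) (fun x hx => by
    rw [← spectrum.neg_eq, Set.mem_neg] at hx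
    exact (le_abs_self x).trans (abs_neg x ▸ spectrum.abs_le_iSup_abs hx)) v
  rw [neg_mulVec, dotProduct_neg] at hneg
  linarith

theorem Matrix.tendsto_iSup_abs_spectrum_zero {ι : Type*} {l : Filter ι} {A : ι → Matrix n n ℝ}
    (hA : Tendsto A l (𝓝 0)) : Tendsto (fun i => ⨆ x ∈ spectrum ℝ (A i), |x|) l (𝓝 0) :=
  spectrum.tendsto_iSup_abs_zero hA

end Norm

theorem Matrix.dotProduct_mulVec_eq_conj {R : Type*} [CommRing R] {H : Matrix n n R}
    (hH : Hᵀ = H) (hdet : IsUnit H.det) (B : Matrix n n R) (v : n → R) :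
    v ⬝ᵥ B *ᵥ v = (H⁻¹ *ᵥ v) ⬝ᵥ (H * B * H) *ᵥ (H⁻¹ *ᵥ v) := by
  have hconj : (H * B * H) *ᵥ (H⁻¹ *ᵥ v) = H *ᵥ (B *ᵥ v) := by
    simp only [mulVec_mulVec, Matrix.mul_assoc, mul_nonsing_inv _ hdet, Matrix.mul_one]
  rw [hconj, dotProduct_mulVec (H⁻¹ *ᵥ v) H, ← mulVec_transpose, hH, mulVec_mulVec,
    mul_nonsing_inv _ hdet, one_mulVec]

theorem abs_dotProduct_mulVec_sub_le {B H : Matrix n n ℝ} (hB : B.IsHermitian)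
    (hH : H.IsHermitian) (hdet : IsUnit H.det) {c : ℝ} (hc : 0 < c) (v : n → ℝ) :
    |v ⬝ᵥ B *ᵥ v - c⁻¹ * (v ⬝ᵥ (H * H)⁻¹ *ᵥ v)| ≤
      (⨆ x ∈ spectrum ℝ (c • (H * B * H) - 1), |x|) * (c⁻¹ * (v ⬝ᵥ (H * H)⁻¹ *ᵥ v)) := by
  have hHT : Hᵀ = H := by simpa using hH.eq
  set x := H⁻¹ *ᵥ v with hx
  have hsq : v ⬝ᵥ (H * H)⁻¹ *ᵥ v = x ⬝ᵥ x := by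
    have hHH : H * (H * H)⁻¹ * H = 1 := by
      rw [Matrix.mul_inv_rev, ← Matrix.mul_assoc, mul_nonsing_inv _ hdet, Matrix.one_mul,
        nonsing_inv_mul _ hdet]
    rw [dotProduct_mulVec_eq_conj hHT hdet, hHH, one_mulVec]
  have hdiff : v ⬝ᵥ B *ᵥ v - c⁻¹ * (x ⬝ᵥ x) = c⁻¹ * (x ⬝ᵥ (c • (H * B * H) - 1) *ᵥ x) := by
    rw [dotProduct_mulVec_eq_conj hHT hdet B, sub_mulVec, smul_mulVec, one_mulVec,
      dotProduct_sub, dotProduct_smul, smul_eq_mul, ← hx]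
    field_simp
  have hR : (c • (H * B * H) - 1).IsHermitian := by
    refine IsHermitian.sub (IsHermitian.smul ?_ (IsSelfAdjoint.all c)) isHermitian_one
    simpa [hHT] using isHermitian_mul_mul_conjTranspose H hB
  rw [hsq, hdiff, abs_mul, abs_of_pos (inv_pos.2 hc), mul_left_comm]
  exact mul_le_mul_of_nonneg_left (hR.abs_dotProduct_mulVec_le x) (inv_pos.2 hc).le

theorem Matrix.tendsto_smul_conj_inv_sub_one {ι : Type*} {l : Filter ι} {A : ι → Matrix n n ℝ}
    {c : ι → ℝ} {H : Matrix n n ℝ} (hc : ∀ i, c i ≠ 0)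
    (hA : ∀ i, IsUnit (A i).det) (hH : IsUnit H.det)
    (hlim : Tendsto (fun i => (c i)⁻¹ • A i) l (𝓝 (H * H))) :
    Tendsto (fun i => c i • (H * (A i)⁻¹ * H) - 1) l (𝓝 0) := by
  have hinv : Tendsto (fun i => ((c i)⁻¹ • A i)⁻¹) l (𝓝 (H * H)⁻¹) := by
    refine (continuousAt_matrix_inv _ ?_).tendsto.comp hlim
    rw [Ring.inverse_eq_inv']
    exact continuousAt_inv₀ (det_mul H H ▸ (hH.mul hH).ne_zero)
  have hHH : H * (H * H)⁻¹ * H - 1 = 0 := by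
    rw [Matrix.mul_inv_rev, ← Matrix.mul_assoc, mul_nonsing_inv _ hH, Matrix.one_mul,
      nonsing_inv_mul _ hH, sub_self]
  refine (hHH ▸ ((hinv.const_mul H).mul_const H).sub_const 1).congr fun i => ?_
  have hsmul : ((c i)⁻¹ • A i)⁻¹ = c i • (A i)⁻¹ := by
    simpa [Units.smul_def] using (A i).inv_smul' (Units.mk0 _ (inv_ne_zero (hc i))) (hA i)
  rw [hsmul, Matrix.mul_smul, Matrix.smul_mul]

end Matrix

theorem Asymptotics.isLittleO_of_abs_le_mul {ι : Type*} {l : Filter ι} {f g ρ : ι → ℝ}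
    (h : ∀ i, |f i| ≤ ρ i * g i) (hρ : Tendsto ρ l (𝓝 0)) : f =o[l] g := by
  have hf : f =O[l] fun i => ρ i * g i :=
    .of_bound 1 (.of_forall fun i => by simpa using (h i).trans (le_abs_self _))
  have hρg : (fun i => ρ i * g i) =o[l] g := by
    simpa using ((isLittleO_one_iff ℝ).2 hρ).mul_isBigO (isBigO_refl g l)
  exact hf.trans_isLittleO hρg

theorem posDef_smat {Ω : Type*} {d : ℕ} {S : Matrix (Fin d) (Fin d) ℝ} (hS : S.PosDef)
    (Φ : ℕ → Ω → Fin d → ℝ) (n : ℕ) (ω : Ω) : (Smat S Φ n ω).PosDef :=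
  hS.add_posSemidef (posSemidef_sum _ fun k _ => by
    simpa using posSemidef_vecMulVec_self_star (Φ k ω))

theorem quadratic_form_asymptotics_general
    {Ω : Type*} {m0 : MeasurableSpace Ω} {μ : Measure Ω}
    {d : ℕ} (Φ : ℕ → Ω → Fin d → ℝ) (M : ℕ → Ω → Fin d → ℝ)
    (S L Lhalf : Matrix (Fin d) (Fin d) ℝ)
    (hS : S.PosDef)
    (hLhalf : Lhalf.PosDef) (hLhalfsq : Lhalf * Lhalf = L)
    (α : ℕ → Ω → ℝ)
    (hαpos : ∀ n ω, 0 < α n ω)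
    (hconv : ∀ᵐ ω ∂μ, Tendsto (fun n => (α n ω)⁻¹ • Smat S Φ n ω) atTop (𝓝 L)) :
    let V : ℕ → Ω → ℝ := fun n ω => M n ω ⬝ᵥ ((Smat S Φ (n - 1) ω)⁻¹ *ᵥ M n ω)
    let v : ℕ → Ω → ℝ := fun n ω => (α (n - 1) ω)⁻¹ * (M n ω ⬝ᵥ (L⁻¹ *ᵥ M n ω))
    let R : ℕ → Ω → Matrix (Fin d) (Fin d) ℝ :=
      fun n ω => α n ω • (Lhalf * (Smat S Φ n ω)⁻¹ * Lhalf) - 1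
    let ρ : ℕ → Ω → ℝ := fun n ω => ⨆ x ∈ spectrum ℝ (R n ω), |x|
    (∀ ω n, |V n ω - v n ω| ≤ ρ (n - 1) ω * v n ω) ∧
      (∀ᵐ ω ∂μ, Tendsto (fun n => ρ (n - 1) ω) atTop (𝓝 0)) ∧
      (∀ᵐ ω ∂μ, (fun n => V n ω - v n ω) =o[atTop] fun n => v n ω) := by
  intro V v R ρ
  subst hLhalfsq
  have hLdet : IsUnit Lhalf.det := hLhalf.det_pos.ne'.isUnit
  have hbound (ω : Ω) (n : ℕ) : |V n ω - v n ω| ≤ ρ (n - 1) ω * v n ω :=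
    abs_dotProduct_mulVec_sub_le (posDef_smat hS Φ _ ω).isHermitian.inv hLhalf.isHermitian hLdet
      (hαpos _ ω) (M n ω)
  have hρ : ∀ᵐ ω ∂μ, Tendsto (fun n => ρ (n - 1) ω) atTop (𝓝 0) := by
    filter_upwards [hconv] with ω hω
    have hR : Tendsto (fun n => R n ω) atTop (𝓝 0) :=
      tendsto_smul_conj_inv_sub_one (fun n => (hαpos n ω).ne')
        (fun n => (posDef_smat hS Φ n ω).det_pos.ne'.isUnit) hLdet hω
    exact (tendsto_iSup_abs_spectrum_zero hR).comp (tendsto_sub_atTop_nat 1)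
  refine ⟨hbound, hρ, ?_⟩
  filter_upwards [hρ] with ω hω
  exact isLittleO_of_abs_le_mul (hbound ω) hω

/-- If `S_n/α_n → L` a.s., then for any sequence `(M_n)` of random vectors, with
`V_n = M_nᵗ S_{n-1}⁻¹ M_n`, `v_n = α_{n-1}⁻¹ M_nᵗ L⁻¹ M_n` and `ρ_{n-1}` the spectral
radius of the symmetric matrix `α_{n-1} L^{1/2} S_{n-1}⁻¹ L^{1/2} - I`, one has
`|V_n - v_n| ≤ ρ_{n-1} v_n` pointwise, `ρ_{n-1} → 0` a.s., and `V_n = v_n + o(v_n)` a.s. -/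
theorem quadratic_form_asymptotics
    {Ω : Type*} {m0 : MeasurableSpace Ω} {μ : Measure Ω} [IsProbabilityMeasure μ]
    {d : ℕ} (Φ : ℕ → Ω → Fin d → ℝ) (M : ℕ → Ω → Fin d → ℝ)
    (S L Lhalf : Matrix (Fin d) (Fin d) ℝ)
    (hS : S.PosDef) (hL : L.PosDef)
    (hLhalf : Lhalf.PosDef) (hLhalfsq : Lhalf * Lhalf = L)
    (α : ℕ → Ω → ℝ)
    (hΦmeas : ∀ n, Measurable (Φ n))
    (hMmeas : ∀ n, Measurable (M n))
    (hαmeas : ∀ n, Measurable (α n))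
    (hαpos : ∀ n ω, 0 < α n ω)
    (hαmono : ∀ᵐ ω ∂μ, Monotone fun n => α n ω)
    (hαtop : ∀ᵐ ω ∂μ, Tendsto (fun n => α n ω) atTop atTop)
    (hconv : ∀ᵐ ω ∂μ, Tendsto (fun n => (α n ω)⁻¹ • Smat S Φ n ω) atTop (𝓝 L)) :
    let V : ℕ → Ω → ℝ := fun n ω => M n ω ⬝ᵥ ((Smat S Φ (n - 1) ω)⁻¹ *ᵥ M n ω)
    let v : ℕ → Ω → ℝ := fun n ω => (α (n - 1) ω)⁻¹ * (M n ω ⬝ᵥ (L⁻¹ *ᵥ M n ω))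
    let R : ℕ → Ω → Matrix (Fin d) (Fin d) ℝ :=
      fun n ω => α n ω • (Lhalf * (Smat S Φ n ω)⁻¹ * Lhalf) - 1
    let ρ : ℕ → Ω → ℝ := fun n ω => ⨆ x ∈ spectrum ℝ (R n ω), |x|
    (∀ ω n, |V n ω - v n ω| ≤ ρ (n - 1) ω * v n ω) ∧
      (∀ᵐ ω ∂μ, Tendsto (fun n => ρ (n - 1) ω) atTop (𝓝 0)) ∧
      (∀ᵐ ω ∂μ, (fun n => V n ω - v n ω) =o[atTop] fun n => v n ω) :=
  quadratic_form_asymptotics_general (m0 := m0) Φ M S L Lhalf hS hLhalf hLhalfsq α hαpos hconv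

end
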